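/- Let A := ∫_{θ*}^1 𝒢(ψ(θ)) f(θ) dθ and B := max_{p∈[0,1]} (1−F(p))·(p−μ). Then 0 < B < A, and setting δ* := B/A ∈ (0,1), one has δ·A > B for every δ ∈ (δ*,1) and δ·A < B for every δ ∈ (0,δ*) (a discount-factor threshold at which the ex-post optimal mechanism overtakes the ex-ante fixed-price mechanism). -/

import Mathlib

open MeasureTheory

/-- `F(x) = ∫₀^x f`, with the convention that it is `0` for `x ≤ 0`. -/
noncomputable def cdf (f : ℝ → ℝ) (x : ℝ) : ℝ := ∫ t in Set.Ioc (0:ℝ) x, f t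

/-- `𝒢(x) = ∫₀^x G(y) dy`, the left-hand integral of the cdf of `g` (`= 0` for `x ≤ 0`). -/
noncomputable def calG (g : ℝ → ℝ) (x : ℝ) : ℝ := ∫ y in Set.Ioc (0:ℝ) x, cdf g y

/-- `μ = ∫₀¹ ω g(ω) dω`, the mean cost. -/
noncomputable def muG (g : ℝ → ℝ) : ℝ := ∫ t in Set.Ioc (0:ℝ) 1, t * g t

/-- The virtual valuation `ψ(θ) = θ − (1 − F(θ))/f(θ)`. -/
noncomputable def psi (f : ℝ → ℝ) (θ : ℝ) : ℝ := θ - (1 - cdf f θ) / f θ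

/-! The fixed-price profit is an integral of the virtual surplus,
`(1 - F r) (r - μ) = ∫_r^1 (ψ - μ) f`, because `(F - 1) (θ - μ)` is an antiderivative of
`(ψ - μ) f`. Integrating by parts, `𝒢 x - (x - μ) = ∫_x^1 (1 - G) > 0` for `x < 1`; so on
`[θ*, 1]`, where `ψ ∈ [0, 1]`, the integrand `𝒢(ψ) f` of `A` dominates `(ψ - μ) f` (strictly
away from `1`), while below `θ*` the latter is nonpositive. Hence every fixed-price profit with
price below `1`, and in particular the maximum `B`, is strictly below `A`. Pricing in `(μ, 1)`
gives `B > 0`, and the claims about `δ` are arithmetic in `B / A`. -/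

open Set

lemma cdf_zero (h : ℝ → ℝ) : cdf h 0 = 0 := by simp [cdf]

lemma cdf_eq_intervalIntegral (h : ℝ → ℝ) {x : ℝ} (hx : 0 ≤ x) :
    cdf h x = ∫ t in (0:ℝ)..x, h t :=
  (intervalIntegral.integral_of_le hx).symm

lemma calG_eq_intervalIntegral (g : ℝ → ℝ) {x : ℝ} (hx : 0 ≤ x) :
    calG g x = ∫ y in (0:ℝ)..x, cdf g y :=
  (intervalIntegral.integral_of_le hx).symm

lemma continuousOn_cdf {h : ℝ → ℝ} {b : ℝ} (hh : IntegrableOn h (Icc 0 b)) :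
    ContinuousOn (cdf h) (Icc 0 b) :=
  intervalIntegral.continuousOn_primitive hh

lemma hasDerivAt_cdf {f : ℝ → ℝ} {b θ : ℝ} (hf : ContinuousOn f (Icc 0 b))
    (hθ : θ ∈ Ioo 0 b) : HasDerivAt (cdf f) (f θ) θ := by
  have hint : IntervalIntegrable f volume 0 θ :=
    (hf.mono (Icc_subset_Icc le_rfl hθ.2.le)).intervalIntegrable_of_Icc hθ.1.le
  have hcont : ContinuousOn f (Ioo 0 b) := hf.mono Ioo_subset_Icc_self
  refine (intervalIntegral.integral_hasDerivAt_right hint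
    (hcont.stronglyMeasurableAtFilter isOpen_Ioo θ hθ)
    (hcont.continuousAt (isOpen_Ioo.mem_nhds hθ))).congr_of_eventuallyEq ?_
  filter_upwards [isOpen_Ioi.mem_nhds hθ.1] with x hx
  exact cdf_eq_intervalIntegral f (le_of_lt hx)

lemma strictMonoOn_cdf {g : ℝ → ℝ} {b : ℝ} (hg : IntegrableOn g (Icc 0 b))
    (hpos : ∀ᵐ t, t ∈ Icc 0 b → 0 < g t) : StrictMonoOn (cdf g) (Icc 0 b) := by
  intro p hp q hq hpq
  have hint : IntervalIntegrable g volume p q :=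
    (intervalIntegrable_iff_integrableOn_Icc_of_le hpq.le).2
      (hg.mono_set (Icc_subset_Icc hp.1 hq.2))
  have hsupp : Ioc p q ≤ᵐ[volume] (Function.support g ∩ Ioc p q : Set ℝ) := by
    filter_upwards [hpos] with t ht htpq
    exact ⟨(ht ⟨hp.1.trans htpq.1.le, htpq.2.trans hq.2⟩).ne', htpq⟩
  have hnonneg : 0 ≤ᵐ[volume.restrict (uIoc p q)] g := by
    rw [uIoc_of_le hpq.le]
    filter_upwards [ae_restrict_mem measurableSet_Ioc, ae_restrict_of_ae hpos] with t htpq ht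
    exact (ht ⟨hp.1.trans htpq.1.le, htpq.2.trans hq.2⟩).le
  have hgap : 0 < ∫ t in p..q, g t :=
    (intervalIntegral.integral_pos_iff_support_of_nonneg_ae' hnonneg hint).2
      ⟨hpq, (by simpa using hpq : 0 < volume (Ioc p q)).trans_le (measure_mono_ae hsupp)⟩
  rw [cdf_eq_intervalIntegral g hp.1, cdf_eq_intervalIntegral g (hp.1.trans hpq.le),
    ← intervalIntegral.integral_add_adjacent_intervals
      ((intervalIntegrable_iff_integrableOn_Icc_of_le hp.1).2
        (hg.mono_set (Icc_subset_Icc le_rfl hp.2))) hint]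
  linarith

lemma cdf_nonneg {g : ℝ → ℝ} {b : ℝ} (hg : IntegrableOn g (Icc 0 b))
    (hpos : ∀ᵐ t, t ∈ Icc 0 b → 0 < g t) {p : ℝ} (hp : p ∈ Icc 0 b) : 0 ≤ cdf g p :=
  cdf_zero g ▸ (strictMonoOn_cdf hg hpos).monotoneOn ⟨le_rfl, hp.1.trans hp.2⟩ hp hp.1

lemma cdf_le_one {g : ℝ → ℝ} (hg : IntegrableOn g (Icc 0 1))
    (hpos : ∀ᵐ t, t ∈ Icc 0 1 → 0 < g t) (hg_one : cdf g 1 = 1) {p : ℝ}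
    (hp : p ∈ Icc (0:ℝ) 1) : cdf g p ≤ 1 :=
  hg_one ▸ (strictMonoOn_cdf hg hpos).monotoneOn hp ⟨zero_le_one, le_rfl⟩ hp.2

lemma cdf_lt_one {g : ℝ → ℝ} (hg : IntegrableOn g (Icc 0 1))
    (hpos : ∀ᵐ t, t ∈ Icc 0 1 → 0 < g t) (hg_one : cdf g 1 = 1) {p : ℝ}
    (hp : p ∈ Ico (0:ℝ) 1) : cdf g p < 1 :=
  hg_one ▸ strictMonoOn_cdf hg hpos (Ico_subset_Icc_self hp) ⟨zero_le_one, le_rfl⟩ hp.2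

lemma integral_id_mul_eq_sub_integral_primitive {g : ℝ → ℝ} {a b : ℝ}
    (hg : IntervalIntegrable g volume a b) :
    ∫ t in a..b, t * g t = b * (∫ t in a..b, g t) - ∫ y in a..b, ∫ t in a..y, g t := by
  have hG := hg.absolutelyContinuousOnInterval_intervalIntegral left_mem_uIcc
  have hid : AbsolutelyContinuousOnInterval id a b :=
    (LipschitzWith.id.lipschitzOnWith (s := uIcc a b)).absolutelyContinuousOnInterval
  have hderiv :
      ∫ t in a..b, t * deriv (fun y => ∫ t in a..y, g t) t = ∫ t in a..b, t * g t := by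
    refine intervalIntegral.integral_congr_ae ?_
    filter_upwards [hg.ae_hasDerivAt_integral] with t ht htab
    rw [(ht (uIoc_subset_uIcc htab) a left_mem_uIcc).deriv]
  have hparts := hid.integral_mul_deriv_eq_deriv_mul hG
  simp only [deriv_id', id, one_mul, intervalIntegral.integral_same, mul_zero, sub_zero]
    at hparts
  rw [← hderiv, hparts]

lemma muG_eq_one_sub_integral_cdf {g : ℝ → ℝ} (hg : IntegrableOn g (Icc 0 1))
    (hg_one : cdf g 1 = 1) : muG g = 1 - ∫ y in (0:ℝ)..1, cdf g y := by
  have hint : IntervalIntegrable g volume 0 1 :=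
    (intervalIntegrable_iff_integrableOn_Icc_of_le zero_le_one).2 hg
  have hcdf : ∫ y in (0:ℝ)..1, cdf g y = ∫ y in (0:ℝ)..1, ∫ t in (0:ℝ)..y, g t :=
    intervalIntegral.integral_congr fun _ hy =>
      cdf_eq_intervalIntegral g (by rw [uIcc_of_le zero_le_one] at hy; exact hy.1)
  have hg_one' : ∫ t in (0:ℝ)..1, g t = 1 := by
    rw [← cdf_eq_intervalIntegral g zero_le_one, hg_one]
  rw [muG, ← intervalIntegral.integral_of_le zero_le_one,
    integral_id_mul_eq_sub_integral_primitive hint, hcdf, hg_one', one_mul]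

lemma continuousOn_calG {g : ℝ → ℝ} (hg : IntegrableOn g (Icc 0 1)) :
    ContinuousOn (calG g) (Icc 0 1) :=
  intervalIntegral.continuousOn_primitive (continuousOn_cdf hg).integrableOn_Icc

lemma calG_nonneg {g : ℝ → ℝ} {b : ℝ} (hg : IntegrableOn g (Icc 0 b))
    (hpos : ∀ᵐ t, t ∈ Icc 0 b → 0 < g t) {x : ℝ} (hx : x ≤ b) : 0 ≤ calG g x :=
  setIntegral_nonneg measurableSet_Ioc fun _ hy => cdf_nonneg hg hpos ⟨hy.1.le, hy.2.trans hx⟩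

lemma calG_sub_sub_muG {g : ℝ → ℝ} (hg : IntegrableOn g (Icc 0 1)) (hg_one : cdf g 1 = 1)
    {x : ℝ} (hx : x ∈ Icc (0:ℝ) 1) :
    calG g x - (x - muG g) = ∫ y in x..1, (1 - cdf g y) := by
  have hcont : ContinuousOn (cdf g) (Icc 0 1) := continuousOn_cdf hg
  have hleft : IntervalIntegrable (cdf g) volume 0 x :=
    (hcont.mono (Icc_subset_Icc le_rfl hx.2)).intervalIntegrable_of_Icc hx.1
  have hright : IntervalIntegrable (cdf g) volume x 1 :=
    (hcont.mono (Icc_subset_Icc hx.1 le_rfl)).intervalIntegrable_of_Icc hx.2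
  rw [intervalIntegral.integral_sub intervalIntegrable_const hright,
    intervalIntegral.integral_const, smul_eq_mul, mul_one, muG_eq_one_sub_integral_cdf hg hg_one,
    calG_eq_intervalIntegral g hx.1,
    ← intervalIntegral.integral_add_adjacent_intervals hleft hright]
  ring

lemma sub_muG_le_calG {g : ℝ → ℝ} (hg : IntegrableOn g (Icc 0 1))
    (hpos : ∀ᵐ t, t ∈ Icc 0 1 → 0 < g t) (hg_one : cdf g 1 = 1) {x : ℝ}
    (hx : x ∈ Icc (0:ℝ) 1) : x - muG g ≤ calG g x := by
  have hgap : 0 ≤ ∫ y in x..1, (1 - cdf g y) :=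
    intervalIntegral.integral_nonneg hx.2 fun y hy =>
      sub_nonneg.2 (cdf_le_one hg hpos hg_one ⟨hx.1.trans hy.1, hy.2⟩)
  linarith [calG_sub_sub_muG hg hg_one hx]

lemma sub_muG_lt_calG {g : ℝ → ℝ} (hg : IntegrableOn g (Icc 0 1))
    (hpos : ∀ᵐ t, t ∈ Icc 0 1 → 0 < g t) (hg_one : cdf g 1 = 1) {x : ℝ}
    (hx : x ∈ Ico (0:ℝ) 1) : x - muG g < calG g x := by
  have hint : IntervalIntegrable (fun y => 1 - cdf g y) volume x 1 :=
    (continuousOn_const.sub ((continuousOn_cdf hg).mono (Icc_subset_Icc hx.1 le_rfl))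
      ).intervalIntegrable_of_Icc hx.2.le
  have hgap : 0 < ∫ y in x..1, (1 - cdf g y) :=
    intervalIntegral.intervalIntegral_pos_of_pos_on hint
      (fun y hy => sub_pos.2 (cdf_lt_one hg hpos hg_one ⟨hx.1.trans hy.1.le, hy.2⟩)) hx.2
  linarith [calG_sub_sub_muG hg hg_one (Ico_subset_Icc_self hx)]

lemma muG_mem_Ico {g : ℝ → ℝ} (hg : IntegrableOn g (Icc 0 1))
    (hpos : ∀ᵐ t, t ∈ Icc 0 1 → 0 < g t) (hg_one : cdf g 1 = 1) : muG g ∈ Ico 0 1 := by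
  have hcont : ContinuousOn (cdf g) (Icc 0 1) := continuousOn_cdf hg
  have hintegral_pos : 0 < ∫ y in (0:ℝ)..1, cdf g y :=
    intervalIntegral.integral_pos zero_lt_one hcont
      (fun y hy => cdf_nonneg hg hpos (Ioc_subset_Icc_self hy))
      ⟨1, right_mem_Icc.2 zero_le_one, by rw [hg_one]; exact zero_lt_one⟩
  have hle : ∫ y in (0:ℝ)..1, cdf g y ≤ ∫ y in (0:ℝ)..1, (1:ℝ) :=
    intervalIntegral.integral_mono_on zero_le_one (hcont.intervalIntegrable_of_Icc zero_le_one)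
      intervalIntegrable_const fun y hy => cdf_le_one hg hpos hg_one hy
  rw [intervalIntegral.integral_const, smul_eq_mul, mul_one, sub_zero] at hle
  rw [muG_eq_one_sub_integral_cdf hg hg_one]
  exact ⟨by linarith, by linarith⟩

lemma continuousOn_psi {f : ℝ → ℝ} (hf_cont : ContinuousOn f (Icc 0 1))
    (hf_pos : ∀ t ∈ Icc (0:ℝ) 1, 0 < f t) : ContinuousOn (psi f) (Icc 0 1) :=
  continuousOn_id.sub ((continuousOn_const.sub (continuousOn_cdf hf_cont.integrableOn_Icc)).div
    hf_cont fun θ hθ => (hf_pos θ hθ).ne')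

lemma psi_le_self {f : ℝ → ℝ} (hf_cont : ContinuousOn f (Icc 0 1))
    (hf_pos : ∀ t ∈ Icc (0:ℝ) 1, 0 < f t) (hf_one : cdf f 1 = 1) {θ : ℝ}
    (hθ : θ ∈ Icc (0:ℝ) 1) : psi f θ ≤ θ := by
  have hF := cdf_le_one hf_cont.integrableOn_Icc (ae_of_all _ hf_pos) hf_one hθ
  have : 0 ≤ (1 - cdf f θ) / f θ := div_nonneg (by linarith) (hf_pos θ hθ).le
  rw [psi]
  linarith

lemma integral_psi_sub_mul {f : ℝ → ℝ} (hf_cont : ContinuousOn f (Icc 0 1))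
    (hf_pos : ∀ t ∈ Icc (0:ℝ) 1, 0 < f t) (hf_one : cdf f 1 = 1) {r : ℝ}
    (hr : r ∈ Icc (0:ℝ) 1) (c : ℝ) :
    ∫ θ in r..1, (psi f θ - c) * f θ = (1 - cdf f r) * (r - c) := by
  have hsub : Icc r 1 ⊆ Icc (0:ℝ) 1 := Icc_subset_Icc hr.1 le_rfl
  have hderiv : ∀ θ ∈ Ioo r 1,
      HasDerivAt (fun θ => (cdf f θ - 1) * (θ - c)) ((psi f θ - c) * f θ) θ := by
    intro θ hθ
    have hθ' : θ ∈ Ioo (0:ℝ) 1 := ⟨hr.1.trans_lt hθ.1, hθ.2⟩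
    refine (((hasDerivAt_cdf hf_cont hθ').sub_const 1).fun_mul
      ((hasDerivAt_id' (x := θ)).sub_const c)).congr_deriv ?_
    have := (hf_pos θ (Ioo_subset_Icc_self hθ')).ne'
    rw [psi]
    field_simp
    ring
  rw [intervalIntegral.integral_eq_sub_of_hasDerivAt_of_le hr.2 ?_ hderiv ?_, hf_one]
  · ring
  · exact (((continuousOn_cdf hf_cont.integrableOn_Icc).mono hsub).sub continuousOn_const).mul
      (continuousOn_id.sub continuousOn_const)
  · exact ((((continuousOn_psi hf_cont hf_pos).sub continuousOn_const).mul hf_cont).mono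
      hsub).intervalIntegrable_of_Icc hr.2

lemma psi_nonpos_of_le {f : ℝ → ℝ} (hpsi_mono : StrictMonoOn (psi f) (Icc 0 1)) {θs θ : ℝ}
    (hθs : θs ∈ Icc (0:ℝ) 1) (hθs0 : psi f θs = 0) (hθ : θ ∈ Icc 0 θs) : psi f θ ≤ 0 :=
  hθs0 ▸ hpsi_mono.monotoneOn ⟨hθ.1, hθ.2.trans hθs.2⟩ hθs hθ.2

lemma psi_nonneg_of_ge {f : ℝ → ℝ} (hpsi_mono : StrictMonoOn (psi f) (Icc 0 1)) {θs θ : ℝ}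
    (hθs : θs ∈ Icc (0:ℝ) 1) (hθs0 : psi f θs = 0) (hθ : θ ∈ Icc θs 1) : 0 ≤ psi f θ :=
  hθs0 ▸ hpsi_mono.monotoneOn hθs ⟨hθs.1.trans hθ.1, hθ.2⟩ hθ.1

noncomputable def fixedPriceProfit (f g : ℝ → ℝ) (p : ℝ) : ℝ := (1 - cdf f p) * (p - muG g)

lemma fixedPriceProfit_pos {f g : ℝ → ℝ} (hf_cont : ContinuousOn f (Icc 0 1))
    (hf_pos : ∀ t ∈ Icc (0:ℝ) 1, 0 < f t) (hf_one : cdf f 1 = 1) (hμ : 0 ≤ muG g) {p : ℝ}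
    (hp : p ∈ Ioo (muG g) 1) : 0 < fixedPriceProfit f g p :=
  mul_pos (sub_pos.2 (cdf_lt_one hf_cont.integrableOn_Icc (ae_of_all _ hf_pos) hf_one
    ⟨hμ.trans hp.1.le, hp.2⟩)) (sub_pos.2 hp.1)

lemma fixedPriceProfit_le_of_le {f g : ℝ → ℝ} (hf_cont : ContinuousOn f (Icc 0 1))
    (hf_pos : ∀ t ∈ Icc (0:ℝ) 1, 0 < f t) (hf_one : cdf f 1 = 1)
    (hpsi_mono : StrictMonoOn (psi f) (Icc 0 1)) {θs r : ℝ} (hθs : θs ∈ Icc (0:ℝ) 1)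
    (hθs0 : psi f θs = 0) (hμ : 0 ≤ muG g) (hr : r ∈ Icc 0 θs) :
    fixedPriceProfit f g r ≤ fixedPriceProfit f g θs := by
  have hcont : ContinuousOn (fun θ => (psi f θ - muG g) * f θ) (Icc 0 1) :=
    ((continuousOn_psi hf_cont hf_pos).sub continuousOn_const).mul hf_cont
  have hlow : ∫ θ in r..θs, (psi f θ - muG g) * f θ ≤ 0 := by
    refine (intervalIntegral.integral_mono_on (g := fun _ => 0) hr.2
      ((hcont.mono (Icc_subset_Icc hr.1 hθs.2)).intervalIntegrable_of_Icc hr.2)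
      intervalIntegrable_const fun θ hθ => ?_).trans_eq intervalIntegral.integral_zero
    have hθ01 : θ ∈ Icc (0:ℝ) 1 := ⟨hr.1.trans hθ.1, hθ.2.trans hθs.2⟩
    have hψ := psi_nonpos_of_le hpsi_mono hθs hθs0 ⟨hθ01.1, hθ.2⟩
    exact mul_nonpos_of_nonpos_of_nonneg (by linarith) (hf_pos θ hθ01).le
  have hsplit := intervalIntegral.integral_add_adjacent_intervals (μ := volume)
    ((hcont.mono (Icc_subset_Icc hr.1 hθs.2)).intervalIntegrable_of_Icc hr.2)
    ((hcont.mono (Icc_subset_Icc hθs.1 le_rfl)).intervalIntegrable_of_Icc hθs.2)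
  rw [integral_psi_sub_mul hf_cont hf_pos hf_one hθs,
    integral_psi_sub_mul hf_cont hf_pos hf_one ⟨hr.1, hr.2.trans hθs.2⟩] at hsplit
  rw [fixedPriceProfit, fixedPriceProfit]
  linarith

lemma fixedPriceProfit_lt_of_ge {f g : ℝ → ℝ} (hg_int : IntegrableOn g (Icc 0 1))
    (hg_ae : ∀ᵐ t, t ∈ Icc (0:ℝ) 1 → 0 < g t) (hg_one : cdf g 1 = 1)
    (hf_cont : ContinuousOn f (Icc 0 1)) (hf_pos : ∀ t ∈ Icc (0:ℝ) 1, 0 < f t)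
    (hf_one : cdf f 1 = 1) (hpsi_mono : StrictMonoOn (psi f) (Icc 0 1)) {θs r : ℝ}
    (hθs : θs ∈ Icc (0:ℝ) 1) (hθs0 : psi f θs = 0) (hr : r ∈ Ico θs 1) :
    fixedPriceProfit f g r < ∫ θ in θs..1, calG g (psi f θ) * f θ := by
  have hr01 : r ∈ Icc (0:ℝ) 1 := ⟨hθs.1.trans hr.1, hr.2.le⟩
  have hψ : ∀ θ ∈ Icc θs 1, psi f θ ∈ Icc (0:ℝ) 1 := fun θ hθ =>
    ⟨psi_nonneg_of_ge hpsi_mono hθs hθs0 hθ,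
      (psi_le_self hf_cont hf_pos hf_one ⟨hθs.1.trans hθ.1, hθ.2⟩).trans hθ.2⟩
  have hsub : Icc θs (1:ℝ) ⊆ Icc 0 1 := Icc_subset_Icc hθs.1 le_rfl
  have hcont_profit : ContinuousOn (fun θ => (psi f θ - muG g) * f θ) (Icc r 1) :=
    (((continuousOn_psi hf_cont hf_pos).sub continuousOn_const).mul hf_cont).mono
      (Icc_subset_Icc hr01.1 le_rfl)
  have hcont_value : ContinuousOn (fun θ => calG g (psi f θ) * f θ) (Icc θs 1) :=
    ((continuousOn_calG hg_int).comp ((continuousOn_psi hf_cont hf_pos).mono hsub) hψ).mul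
      (hf_cont.mono hsub)
  have hθr : Icc r 1 ⊆ Icc θs 1 := Icc_subset_Icc hr.1 le_rfl
  calc fixedPriceProfit f g r = ∫ θ in r..1, (psi f θ - muG g) * f θ :=
        (integral_psi_sub_mul hf_cont hf_pos hf_one hr01 (muG g)).symm
    _ < ∫ θ in r..1, calG g (psi f θ) * f θ := by
        refine intervalIntegral.integral_lt_integral_of_continuousOn_of_le_of_exists_lt hr.2
          hcont_profit (hcont_value.mono hθr) (fun θ hθ => ?_) ⟨r, left_mem_Icc.2 hr.2.le, ?_⟩
        · have hθ' : θ ∈ Icc θs 1 := hθr (Ioc_subset_Icc_self hθ)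
          exact mul_le_mul_of_nonneg_right
            (by linarith [sub_muG_le_calG hg_int hg_ae hg_one (hψ θ hθ')]) (hf_pos θ (hsub hθ')).le
        · have hψr : psi f r ∈ Ico (0:ℝ) 1 :=
            ⟨(hψ r ⟨hr.1, hr.2.le⟩).1, (psi_le_self hf_cont hf_pos hf_one hr01).trans_lt hr.2⟩
          exact mul_lt_mul_of_pos_right
            (by linarith [sub_muG_lt_calG hg_int hg_ae hg_one hψr]) (hf_pos r hr01)
    _ ≤ ∫ θ in θs..1, calG g (psi f θ) * f θ := by
        refine intervalIntegral.integral_mono_interval hr.1 hr.2.le le_rfl ?_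
          (hcont_value.intervalIntegrable_of_Icc hθs.2)
        filter_upwards [ae_restrict_mem measurableSet_Ioc] with θ hθ
        exact mul_nonneg (calG_nonneg hg_int hg_ae (hψ θ (Ioc_subset_Icc_self hθ)).2)
          (hf_pos θ (hsub (Ioc_subset_Icc_self hθ))).le

lemma fixedPriceProfit_lt {f g : ℝ → ℝ} (hg_int : IntegrableOn g (Icc 0 1))
    (hg_ae : ∀ᵐ t, t ∈ Icc (0:ℝ) 1 → 0 < g t) (hg_one : cdf g 1 = 1)
    (hf_cont : ContinuousOn f (Icc 0 1)) (hf_pos : ∀ t ∈ Icc (0:ℝ) 1, 0 < f t)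
    (hf_one : cdf f 1 = 1) (hpsi_mono : StrictMonoOn (psi f) (Icc 0 1)) {θs r : ℝ}
    (hθs : θs ∈ Ico (0:ℝ) 1) (hθs0 : psi f θs = 0) (hr : r ∈ Ico 0 1) :
    fixedPriceProfit f g r < ∫ θ in θs..1, calG g (psi f θ) * f θ := by
  have hθs' : θs ∈ Icc (0:ℝ) 1 := Ico_subset_Icc_self hθs
  rcases le_total r θs with hrθs | hθsr
  · exact (fixedPriceProfit_le_of_le hf_cont hf_pos hf_one hpsi_mono hθs' hθs0
      (muG_mem_Ico hg_int hg_ae hg_one).1 ⟨hr.1, hrθs⟩).trans_lt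
      (fixedPriceProfit_lt_of_ge hg_int hg_ae hg_one hf_cont hf_pos hf_one hpsi_mono hθs' hθs0
        ⟨le_rfl, hθs.2⟩)
  · exact fixedPriceProfit_lt_of_ge hg_int hg_ae hg_one hf_cont hf_pos hf_one hpsi_mono hθs'
      hθs0 ⟨hθsr, hr.2⟩

lemma div_threshold_of_pos_of_lt {A B : ℝ} (hB : 0 < B) (hBA : B < A) :
    B / A ∈ Ioo (0:ℝ) 1 ∧ (∀ δ ∈ Ioo (B / A) 1, B < δ * A) ∧
      ∀ δ ∈ Ioo (0:ℝ) (B / A), δ * A < B := by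
  have hA : 0 < A := hB.trans hBA
  exact ⟨⟨div_pos hB hA, (div_lt_one hA).2 hBA⟩, fun δ hδ => (div_lt_iff₀ hA).1 hδ.1,
    fun δ hδ => (lt_div_iff₀ hA).1 hδ.2⟩

theorem stmt9_general
    (f g : ℝ → ℝ)
    (hg_int : IntegrableOn g (Set.Icc 0 1))
    (hg_ae : ∀ᵐ t, t ∈ Set.Icc (0:ℝ) 1 → 0 < g t)
    (hf_one : cdf f 1 = 1)
    (hg_one : cdf g 1 = 1)
    (hf_cont : ContinuousOn f (Set.Icc 0 1))
    (hf_pos : ∀ t ∈ Set.Icc (0:ℝ) 1, 0 < f t)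
    (hpsi_mono : StrictMonoOn (psi f) (Set.Icc 0 1))
    (θs : ℝ) (hθs : θs ∈ Set.Ioo (0:ℝ) 1) (hθs0 : psi f θs = 0)
    (B : ℝ)
    (hB : IsGreatest ((fun p => (1 - cdf f p) * (p - muG g)) '' Set.Icc (0:ℝ) 1) B) :
    0 < B ∧ B < (∫ θ in θs..1, calG g (psi f θ) * f θ) ∧
    B / (∫ θ in θs..1, calG g (psi f θ) * f θ) ∈ Set.Ioo (0:ℝ) 1 ∧
    (∀ δ ∈ Set.Ioo (B / (∫ θ in θs..1, calG g (psi f θ) * f θ)) 1,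
      B < δ * (∫ θ in θs..1, calG g (psi f θ) * f θ)) ∧
    (∀ δ ∈ Set.Ioo (0:ℝ) (B / (∫ θ in θs..1, calG g (psi f θ) * f θ)),
      δ * (∫ θ in θs..1, calG g (psi f θ) * f θ) < B) := by
  obtain ⟨hμ0, hμ1⟩ := muG_mem_Ico hg_int hg_ae hg_one
  obtain ⟨⟨p, hp, rfl⟩, hmax⟩ := hB
  have hmid : (1 + muG g) / 2 ∈ Ioo (muG g) 1 := ⟨by linarith, by linarith⟩
  have hpos : 0 < fixedPriceProfit f g p :=
    (fixedPriceProfit_pos hf_cont hf_pos hf_one hμ0 hmid).trans_le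
      (hmax ⟨_, ⟨hμ0.trans hmid.1.le, hmid.2.le⟩, rfl⟩)
  have hp1 : p < 1 := hp.2.lt_of_ne (by rintro rfl; simp [fixedPriceProfit, hf_one] at hpos)
  have hlt := fixedPriceProfit_lt hg_int hg_ae hg_one hf_cont hf_pos hf_one hpsi_mono
    (Ioo_subset_Ico_self hθs) hθs0 ⟨hp.1, hp1⟩
  exact ⟨hpos, hlt, div_threshold_of_pos_of_lt hpos hlt⟩

/-- with `A = ∫_{θ*}^1 𝒢(ψ(θ)) f(θ) dθ` and `B` the maximal ex-ante
fixed-price profit, `0 < B < A`, `δ* = B/A ∈ (0,1)`, and `δ·A ≷ B` according as `δ ≷ δ*`. -/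
theorem stmt9
    (f g : ℝ → ℝ)
    (hf_int : IntegrableOn f (Set.Icc 0 1))
    (hg_int : IntegrableOn g (Set.Icc 0 1))
    (hf_ae : ∀ᵐ t, t ∈ Set.Icc (0:ℝ) 1 → 0 < f t)
    (hg_ae : ∀ᵐ t, t ∈ Set.Icc (0:ℝ) 1 → 0 < g t)
    (hf_one : cdf f 1 = 1)
    (hg_one : cdf g 1 = 1)
    (hf_cont : ContinuousOn f (Set.Icc 0 1))
    (hf_pos : ∀ t ∈ Set.Icc (0:ℝ) 1, 0 < f t)
    (hpsi_mono : StrictMonoOn (psi f) (Set.Icc 0 1))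
    (θs : ℝ) (hθs : θs ∈ Set.Ioo (0:ℝ) 1) (hθs0 : psi f θs = 0)
    (B : ℝ)
    (hB : IsGreatest ((fun p => (1 - cdf f p) * (p - muG g)) '' Set.Icc (0:ℝ) 1) B) :
    0 < B ∧ B < (∫ θ in θs..1, calG g (psi f θ) * f θ) ∧
    B / (∫ θ in θs..1, calG g (psi f θ) * f θ) ∈ Set.Ioo (0:ℝ) 1 ∧
    (∀ δ ∈ Set.Ioo (B / (∫ θ in θs..1, calG g (psi f θ) * f θ)) 1,
      B < δ * (∫ θ in θs..1, calG g (psi f θ) * f θ)) ∧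
    (∀ δ ∈ Set.Ioo (0:ℝ) (B / (∫ θ in θs..1, calG g (psi f θ) * f θ)),
      δ * (∫ θ in θs..1, calG g (psi f θ) * f θ) < B) :=
  stmt9_general f g hg_int hg_ae hf_one hg_one hf_cont hf_pos hpsi_mono θs hθs hθs0 B hB
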